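/- Let E ⊆ ℝ² be a rectifiable set of finite H¹-measure (a countable union of subsets of C¹ curves up to an H¹-null set) contained in a C¹ curve Γ with normal line field ν_x, let z ∈ ℝ², φ ∈ ℝ, and suppose dist(ν_x, z) ≤ D for every x ∈ E. Then the Lebesgue measure of the set swept by E under the continuous rotation around z by total angle φ is at most |φ| · D · H¹(E). -/

import Mathlib

/-!
The swept set is covered by the image of the sweep map `F(t, s) = e^{itφ} (Γ s - z) + z` on
`[0, 1] × S`, where `S` is a set of curve parameters. The Jacobian of `F` is `-φ ⟪Γ s - z, Γ' s⟫`,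
and `|⟪Γ s - z, Γ' s⟫|` is the distance from `z` to the normal line at `Γ s`, so the area formula
bounds the swept area by `|φ| D` times the length of `S`. As `Γ'` is uniformly continuous, `Γ` is
`(1 - ε)`-expanding on short parameter intervals, so the length of such a piece of `S` is at most
`(1 - ε)⁻¹` times the `H¹`-measure of its image. Cutting the parameters into short pieces with
disjoint images in `E` and letting `ε → 0` gives the bound.
-/

open MeasureTheory Set ENNReal Filter Topology
open scoped ComplexConjugate RealInnerProductSpace

noncomputable def columnsCLM (u v : ℂ) : ℂ →L[ℝ] ℂ :=
  Complex.reCLM.smulRight u + Complex.imCLM.smulRight v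

@[simp]
lemma columnsCLM_apply (u v h : ℂ) : columnsCLM u v h = h.re • u + h.im • v := rfl

lemma det_columnsCLM (u v : ℂ) : (columnsCLM u v).det = (conj u * v).im := by
  rw [ContinuousLinearMap.det, ← LinearMap.det_toMatrix Complex.basisOneI, Matrix.det_fin_two]
  simp [LinearMap.toMatrix_apply, Complex.coe_basisOneI_repr, Complex.coe_basisOneI, mul_comm,
    neg_add_eq_sub]

lemma det_columnsCLM_mul_left {c : ℂ} (hc : ‖c‖ = 1) (u v : ℂ) :
    (columnsCLM (c * u) (c * v)).det = (columnsCLM u v).det := by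
  have hcc : conj c * c = 1 := by
    rw [Complex.conj_mul', hc]; norm_num
  rw [det_columnsCLM, det_columnsCLM, map_mul,
    show conj c * conj u * (c * v) = (conj c * c) * (conj u * v) by ring, hcc, one_mul]

lemma det_columnsCLM_ofReal_mul_I_mul (φ : ℝ) (a b : ℂ) :
    (columnsCLM (φ * Complex.I * a) b).det = -φ * ⟪a, b⟫ := by
  rw [det_columnsCLM, Complex.inner, map_mul, map_mul, Complex.conj_ofReal, Complex.conj_I,
    show (φ : ℂ) * -Complex.I * conj a * b = -Complex.I * (φ * (b * conj a)) by ring]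
  simp

lemma abs_det_columnsCLM_exp_mul (φ θ : ℝ) (a b : ℂ) :
    |(columnsCLM (Complex.exp (θ * Complex.I) * (φ * Complex.I * a))
      (Complex.exp (θ * Complex.I) * b)).det| = |φ| * |⟪a, b⟫| := by
  rw [det_columnsCLM_mul_left (Complex.norm_exp_ofReal_mul_I θ),
    det_columnsCLM_ofReal_mul_I_mul, abs_mul, abs_neg]

lemma abs_inner_le_mul_infDist_normal (p b z : ℂ) :
    |⟪p - z, b⟫| ≤ ‖b‖ * Metric.infDist z {q : ℂ | ∃ s : ℝ, q = p + s * (Complex.I * b)} := by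
  have : Nonempty {q : ℂ | ∃ s : ℝ, q = p + s * (Complex.I * b)} := ⟨⟨p, 0, by simp⟩⟩
  rw [Metric.infDist_eq_iInf, Real.mul_iInf_of_nonneg (norm_nonneg b)]
  refine le_ciInf fun ⟨q, s, hq⟩ => ?_
  have hperp : ⟪Complex.I * b, b⟫ = 0 := by
    simp [Complex.inner, Complex.mul_re, Complex.mul_im, mul_comm]
  calc |⟪p - z, b⟫| = |⟪q - z, b⟫| := by
        rw [hq, show p + s * (Complex.I * b) - z = (p - z) + s • (Complex.I * b) by
          rw [Complex.real_smul]; ring, inner_add_left, real_inner_smul_left, hperp]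
        simp
    _ ≤ ‖q - z‖ * ‖b‖ := abs_real_inner_le_norm _ _
    _ = ‖b‖ * dist z q := by rw [dist_comm, dist_eq_norm, mul_comm]

lemma Complex.volume_reProdIm (s t : Set ℝ) : volume (s ×ℂ t) = volume s * volume t := by
  calc volume (s ×ℂ t) = volume (Complex.measurableEquivRealProd ⁻¹' (s ×ˢ t)) := rfl
    _ = volume s * volume t := by
      rw [Complex.volume_preserving_equiv_real_prod.measure_preimage_equiv]
      exact Measure.prod_prod s t

/-- The parameter plane is `ℂ` so that the area formula for maps `ℂ → ℂ` applies:
`t + s * I` stands for the rotation time `t` and the curve parameter `s`. -/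
noncomputable def rotationSweep (φ : ℝ) (z : ℂ) (Γ : ℝ → ℂ) (w : ℂ) : ℂ :=
  Complex.exp ((w.re * φ : ℝ) * Complex.I) * (Γ w.im - z) + z

lemma hasFDerivWithinAt_rotationSweep (φ : ℝ) (z : ℂ) {Γ : ℝ → ℂ} {γ : ℂ} {s : Set ℝ} {w : ℂ}
    (hΓ : HasDerivWithinAt Γ γ s w.im) :
    HasFDerivWithinAt (rotationSweep φ z Γ)
      (columnsCLM (Complex.exp ((w.re * φ : ℝ) * Complex.I) * (φ * Complex.I * (Γ w.im - z)))
        (Complex.exp ((w.re * φ : ℝ) * Complex.I) * γ))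
      (Complex.im ⁻¹' s) w := by
  have hangle : HasFDerivAt (fun w : ℂ => ((w.re * φ : ℝ) : ℂ) * Complex.I)
      (Complex.reCLM.smulRight (φ * Complex.I : ℂ)) w := by
    convert (Complex.reCLM.smulRight (φ * Complex.I : ℂ)).hasFDerivAt using 1
    ext w
    simp [Complex.real_smul, mul_comm, mul_left_comm]
  have hcurve : HasFDerivWithinAt (fun w : ℂ => Γ w.im) (Complex.imCLM.smulRight γ)
      (Complex.im ⁻¹' s) w :=
    hΓ.hasFDerivWithinAt.comp w Complex.imCLM.hasFDerivAt.hasFDerivWithinAt (mapsTo_preimage _ _)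
  refine ((hangle.cexp.hasFDerivWithinAt.mul (hcurve.sub_const z)).add_const z).congr_fderiv ?_
  ext h
  simp only [add_apply, smul_apply,
    ContinuousLinearMap.smulRight_apply, Complex.reCLM_apply, Complex.imCLM_apply,
    Complex.ofReal_mul, Complex.real_smul, smul_eq_mul, columnsCLM_apply]
  ring

lemma volume_rotationSweep_image_le (φ : ℝ) (z : ℂ) {Γ Γ' : ℝ → ℂ} {A : Set ℝ}
    (hA : MeasurableSet A) (hΓ : ∀ t ∈ A, HasDerivWithinAt Γ (Γ' t) A t) {D : ℝ}
    (hD : ∀ t ∈ A, |⟪Γ t - z, Γ' t⟫| ≤ D) :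
    volume (rotationSweep φ z Γ '' (Icc 0 1 ×ℂ A)) ≤ ENNReal.ofReal (|φ| * D) * volume A := by
  have hS : MeasurableSet (Icc (0 : ℝ) 1 ×ℂ A) :=
    (measurableSet_Icc.preimage Complex.measurable_re).inter (hA.preimage Complex.measurable_im)
  calc volume (rotationSweep φ z Γ '' (Icc 0 1 ×ℂ A))
      ≤ ∫⁻ w in Icc 0 1 ×ℂ A, ENNReal.ofReal |(columnsCLM
          (Complex.exp ((w.re * φ : ℝ) * Complex.I) * (φ * Complex.I * (Γ w.im - z)))
          (Complex.exp ((w.re * φ : ℝ) * Complex.I) * Γ' w.im)).det| :=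
        addHaar_image_le_lintegral_abs_det_fderiv volume hS fun w hw =>
          (hasFDerivWithinAt_rotationSweep φ z (hΓ w.im hw.2)).mono inter_subset_right
    _ ≤ ∫⁻ _ in Icc 0 1 ×ℂ A, ENNReal.ofReal (|φ| * D) := by
        refine setLIntegral_mono' hS fun w hw => ENNReal.ofReal_le_ofReal ?_
        rw [abs_det_columnsCLM_exp_mul]
        exact mul_le_mul_of_nonneg_left (hD w.im hw.2) (abs_nonneg φ)
    _ = ENNReal.ofReal (|φ| * D) * volume A := by
        rw [setLIntegral_const, Complex.volume_reProdIm, Real.volume_Icc, sub_zero,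
          ENNReal.ofReal_one, one_mul]

lemma iUnion_rotate_image_subset {ι : Type*} (φ : ℝ) (z : ℂ) {Γ : ℝ → ℂ} {E : Set ℂ}
    {A : ι → Set ℝ} (hE : E ⊆ ⋃ j, Γ '' A j) :
    ⋃ t ∈ Icc (0 : ℝ) 1, (fun u : ℂ => Complex.exp ((t * φ : ℝ) * Complex.I) * (u - z) + z) '' E ⊆
      ⋃ j, rotationSweep φ z Γ '' (Icc 0 1 ×ℂ A j) := by
  simp only [iUnion_subset_iff, image_subset_iff]
  intro t ht x hx
  obtain ⟨j, s, hs, rfl⟩ := mem_iUnion.1 (hE hx)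
  exact mem_iUnion.2 ⟨j, t + s * Complex.I, by simp [Complex.mem_reProdIm, ht, hs],
    by simp [rotationSweep]⟩

lemma mul_dist_le_dist_of_norm_deriv_sub_le {F : Type*} [NormedAddCommGroup F] [NormedSpace ℝ F]
    {Γ Γ' : ℝ → F} {s t ε : ℝ} {v : F} (hv : ‖v‖ = 1)
    (hΓ : ∀ u ∈ uIcc s t, HasDerivWithinAt Γ (Γ' u) (uIcc s t) u)
    (hΓ' : ∀ u ∈ uIcc s t, ‖Γ' u - v‖ ≤ ε) :
    (1 - ε) * dist s t ≤ dist (Γ s) (Γ t) := by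
  have hmvt : ‖(Γ s - s • v) - (Γ t - t • v)‖ ≤ ε * ‖s - t‖ :=
    (convex_uIcc s t).norm_image_sub_le_of_norm_hasDerivWithin_le
      (fun u hu => ((hΓ u hu).sub ((hasDerivAt_id u).smul_const v).hasDerivWithinAt).congr_deriv
        (by simp)) hΓ' right_mem_uIcc left_mem_uIcc
  have hlin : ‖(s - t) • v‖ = ‖s - t‖ := by rw [norm_smul, hv, mul_one]
  rw [dist_eq_norm, dist_eq_norm]
  calc (1 - ε) * ‖s - t‖ = ‖(s - t) • v‖ - ε * ‖s - t‖ := by rw [hlin]; ring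
    _ ≤ ‖(s - t) • v‖ - ‖(Γ s - Γ t) - (s - t) • v‖ := by
        rw [show (Γ s - Γ t) - (s - t) • v = (Γ s - s • v) - (Γ t - t • v) by module]
        linarith
    _ ≤ ‖Γ s - Γ t‖ := by
        linarith [norm_sub_norm_le ((s - t) • v) (Γ s - Γ t),
          norm_sub_rev (Γ s - Γ t) ((s - t) • v)]

lemma mul_dist_le_dist_of_dist_le {F : Type*} [NormedAddCommGroup F] [NormedSpace ℝ F]
    {L δ ε : ℝ} {Γ Γ' : ℝ → F}
    (hderiv : ∀ t ∈ Icc (0:ℝ) L, HasDerivWithinAt Γ (Γ' t) (Icc 0 L) t)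
    (hunit : ∀ t ∈ Icc (0:ℝ) L, ‖Γ' t‖ = 1)
    (hδ : ∀ u ∈ Icc (0:ℝ) L, ∀ t ∈ Icc (0:ℝ) L, dist u t ≤ δ → dist (Γ' u) (Γ' t) ≤ ε)
    {s t : ℝ} (hs : s ∈ Icc 0 L) (ht : t ∈ Icc 0 L) (hst : dist s t ≤ δ) :
    (1 - ε) * dist s t ≤ dist (Γ s) (Γ t) := by
  have hsub : uIcc s t ⊆ Icc 0 L := uIcc_subset_Icc hs ht
  refine mul_dist_le_dist_of_norm_deriv_sub_le (hunit t ht)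
    (fun u hu => (hderiv u (hsub hu)).mono hsub) fun u hu => ?_
  rw [← dist_eq_norm]
  exact hδ u (hsub hu) t ht ((Real.dist_right_le_of_mem_uIcc hu).trans hst)

lemma hausdorffMeasure_le_of_mul_dist_le {X Y : Type*} [MetricSpace X] [MeasurableSpace X]
    [BorelSpace X] [MetricSpace Y] [MeasurableSpace Y] [BorelSpace Y] {f : X → Y} {A : Set X}
    {c : ℝ} (hc : 0 < c) {d : ℝ} (hd : 0 ≤ d)
    (hf : ∀ x ∈ A, ∀ y ∈ A, c * dist x y ≤ dist (f x) (f y)) :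
    μH[d] A ≤ ENNReal.ofReal c⁻¹ ^ d * μH[d] (f '' A) := by
  have hanti : AntilipschitzWith (Real.toNNReal c⁻¹) (f ∘ ((↑) : A → X)) :=
    AntilipschitzWith.of_le_mul_dist fun x y => by
      rw [Real.coe_toNNReal _ (inv_nonneg.2 hc.le), Subtype.dist_eq, ← div_eq_inv_mul,
        le_div_iff₀' hc]
      exact hf x x.2 y y.2
  have := hanti.le_hausdorffMeasure_image hd univ
  rwa [← isometry_subtype_coe.hausdorffMeasure_image (Or.inl hd), image_comp, image_univ,
    Subtype.range_coe] at this

lemma ContinuousOn.measurableSet_inter_preimage {α β : Type*} [TopologicalSpace α]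
    [MeasurableSpace α] [OpensMeasurableSpace α] [TopologicalSpace β] [MeasurableSpace β]
    [BorelSpace β] {f : α → β} {s : Set α} {t : Set β} (hf : ContinuousOn f s)
    (hs : MeasurableSet s) (ht : MeasurableSet t) : MeasurableSet (s ∩ f ⁻¹' t) := by
  rw [← Subtype.image_preimage_coe]
  exact (MeasurableEmbedding.subtype_coe hs).measurableSet_image.2
    (hf.domRestrict.measurable ht)

lemma exists_nat_mem_Icc_mul {t δ : ℝ} (ht : 0 ≤ t) (hδ : 0 < δ) :
    ∃ j : ℕ, t ∈ Icc (j * δ) ((j + 1) * δ) :=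
  ⟨⌊t / δ⌋₊, (le_div_iff₀ hδ).1 (Nat.floor_le (div_nonneg ht hδ.le)),
    ((div_le_iff₀ hδ).1 (Nat.lt_floor_add_one _).le)⟩

lemma exists_measurable_pieces {Y : Type*} [TopologicalSpace Y] [T2Space Y] [MeasurableSpace Y]
    [BorelSpace Y] (μ : Measure Y) {Γ : ℝ → Y} {T : Set ℝ} (hT : IsCompact T) (hT0 : T ⊆ Ici 0)
    (hΓ : ContinuousOn Γ T) {δ : ℝ} (hδ : 0 < δ) (E : Set Y) :
    ∃ A : ℕ → Set ℝ, (∀ j, MeasurableSet (A j)) ∧ (∀ j, A j ⊆ T) ∧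
      (∀ j, ∀ s ∈ A j, ∀ t ∈ A j, dist s t ≤ δ) ∧ E ∩ Γ '' T ⊆ ⋃ j, Γ '' A j ∧
      ∑' j, μ (Γ '' A j) ≤ μ E := by
  set I : ℕ → Set ℝ := fun j => T ∩ Icc (j * δ) ((j + 1) * δ)
  have hI : ∀ j, IsCompact (I j) := fun j => hT.inter_right isClosed_Icc
  set C : ℕ → Set Y := fun j => Γ '' I j
  set B : ℕ → Set Y := fun j => toMeasurable μ E ∩ disjointed C j
  have hB : ∀ j, MeasurableSet (B j) := fun j => (measurableSet_toMeasurable μ E).inter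
    (MeasurableSet.disjointed (fun j => ((hI j).image_of_continuousOn
      (hΓ.mono inter_subset_left)).measurableSet) j)
  refine ⟨fun j => I j ∩ Γ ⁻¹' B j,
    fun j => (hΓ.mono inter_subset_left).measurableSet_inter_preimage (hI j).measurableSet (hB j),
    fun j => inter_subset_left.trans inter_subset_left, ?_, ?_, ?_⟩
  · intro j s hs t ht
    simpa [add_mul, ← sub_mul] using Real.dist_le_of_mem_Icc hs.1.2 ht.1.2
  · rintro _ ⟨hxE, t, htT, rfl⟩
    obtain ⟨j, hj⟩ := exists_nat_mem_Icc_mul (hT0 htT) hδ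
    have : Γ t ∈ ⋃ j, disjointed C j := by
      rw [iUnion_disjointed]
      exact mem_iUnion.2 ⟨j, t, ⟨htT, hj⟩, rfl⟩
    obtain ⟨k, hk⟩ := mem_iUnion.1 this
    obtain ⟨s, hsI, hs⟩ := disjointed_subset _ k hk
    exact mem_iUnion.2 ⟨k, s, ⟨hsI, subset_toMeasurable μ E (hs ▸ hxE), hs ▸ hk⟩, hs⟩
  · calc ∑' j, μ (Γ '' (I j ∩ Γ ⁻¹' B j)) ≤ ∑' j, μ (B j) :=
          ENNReal.tsum_le_tsum fun j => measure_mono <| by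
            rw [image_inter_preimage]; exact inter_subset_right
      _ = μ (⋃ j, B j) := (measure_iUnion
          ((disjoint_disjointed _).mono fun _ _ h => h.mono inter_subset_right inter_subset_right)
          hB).symm
      _ ≤ μ (toMeasurable μ E) := measure_mono (iUnion_subset fun j => inter_subset_left)
      _ = μ E := measure_toMeasurable E

lemma ENNReal.le_of_forall_lt_one_le_ofReal_inv_one_sub_mul {a b : ℝ≥0∞}
    (h : ∀ ε : ℝ, 0 < ε → ε < 1 → a ≤ ENNReal.ofReal (1 - ε)⁻¹ * b) : a ≤ b := by
  have hlim : Tendsto (fun ε : ℝ => ENNReal.ofReal (1 - ε)⁻¹ * b) (𝓝[>] 0) (𝓝 b) := by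
    have h1 : Tendsto (fun ε : ℝ => (1 - ε)⁻¹) (𝓝[>] 0) (𝓝 1) := by
      have := (tendsto_const_nhds (x := (1 : ℝ)).sub (tendsto_id (x := 𝓝 0))).inv₀ (by norm_num)
      simpa using this.mono_left nhdsWithin_le_nhds
    simpa using ENNReal.Tendsto.mul_const (ENNReal.tendsto_ofReal h1) (Or.inl (by simp))
  refine ge_of_tendsto hlim ?_
  filter_upwards [Ioo_mem_nhdsGT zero_lt_one] with ε hε using h ε hε.1 hε.2

lemma volume_iUnion_rotate_image_le_of_lt_one {L : ℝ} {Γ Γ' : ℝ → ℂ}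
    (hderiv : ∀ t ∈ Icc (0:ℝ) L, HasDerivWithinAt Γ (Γ' t) (Icc 0 L) t)
    (hcont : ContinuousOn Γ' (Icc 0 L)) (hunit : ∀ t ∈ Icc (0:ℝ) L, ‖Γ' t‖ = 1)
    {E : Set ℂ} (hEsub : E ⊆ Γ '' Icc 0 L) {z : ℂ} {φ D : ℝ}
    (hD : ∀ t ∈ Icc (0:ℝ) L, Γ t ∈ E → |⟪Γ t - z, Γ' t⟫| ≤ D) {ε : ℝ} (hε : 0 < ε)
    (hε1 : ε < 1) :
    volume (⋃ t ∈ Icc (0:ℝ) 1,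
        (fun u : ℂ => Complex.exp ((t * φ : ℝ) * Complex.I) * (u - z) + z) '' E) ≤
      ENNReal.ofReal (1 - ε)⁻¹ * (ENNReal.ofReal (|φ| * D) * μH[1] E) := by
  have hΓ : ContinuousOn Γ (Icc 0 L) := fun t ht => (hderiv t ht).continuousWithinAt
  set T := Icc 0 L ∩ (fun t => |⟪Γ t - z, Γ' t⟫|) ⁻¹' Iic D
  have hT : IsCompact T := isCompact_Icc.of_isClosed_subset
    ((((hΓ.sub continuousOn_const).inner hcont).abs).preimage_isClosed_of_isClosed isClosed_Icc
      isClosed_Iic) inter_subset_left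
  have hET : E ⊆ Γ '' T := fun x hx => by
    obtain ⟨t, ht, rfl⟩ := hEsub hx
    exact ⟨t, ⟨ht, hD t ht hx⟩, rfl⟩
  obtain ⟨δ, hδ, hΓ'δ⟩ := Metric.uniformContinuousOn_iff_le.1
    (isCompact_Icc.uniformContinuousOn_of_continuous hcont) ε hε
  obtain ⟨A, hAm, hAT, hAδ, hEA, hAE⟩ := exists_measurable_pieces μH[1] hT
    (fun t ht => ht.1.1) (hΓ.mono inter_subset_left) hδ E
  have hAL : ∀ j, A j ⊆ Icc 0 L := fun j => (hAT j).trans inter_subset_left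
  have hpiece : ∀ j, volume (rotationSweep φ z Γ '' (Icc 0 1 ×ℂ A j)) ≤
      ENNReal.ofReal (|φ| * D) * (ENNReal.ofReal (1 - ε)⁻¹ * μH[1] (Γ '' A j)) := by
    intro j
    refine (volume_rotationSweep_image_le φ z (hAm j)
      (fun t ht => (hderiv t (hAL j ht)).mono (hAL j)) fun t ht => (hAT j ht).2).trans ?_
    gcongr
    simpa [hausdorffMeasure_real] using hausdorffMeasure_le_of_mul_dist_le (sub_pos.2 hε1)
      zero_le_one fun s hs t ht => mul_dist_le_dist_of_dist_le hderiv hunit hΓ'δ (hAL j hs)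
        (hAL j ht) (hAδ j s hs t ht)
  calc volume (⋃ t ∈ Icc (0:ℝ) 1,
        (fun u : ℂ => Complex.exp ((t * φ : ℝ) * Complex.I) * (u - z) + z) '' E)
      ≤ volume (⋃ j, rotationSweep φ z Γ '' (Icc 0 1 ×ℂ A j)) :=
        measure_mono (iUnion_rotate_image_subset φ z fun x hx => hEA ⟨hx, hET hx⟩)
    _ ≤ ∑' j, ENNReal.ofReal (|φ| * D) * (ENNReal.ofReal (1 - ε)⁻¹ * μH[1] (Γ '' A j)) :=
        (measure_iUnion_le _).trans (ENNReal.tsum_le_tsum hpiece)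
    _ ≤ ENNReal.ofReal (1 - ε)⁻¹ * (ENNReal.ofReal (|φ| * D) * μH[1] E) := by
        rw [ENNReal.tsum_mul_left, ENNReal.tsum_mul_left, mul_left_comm]
        gcongr

theorem rotation_sweep_normal_bound_general (L : ℝ) (Γ Γ' : ℝ → ℂ)
    (hderiv : ∀ t ∈ Icc (0:ℝ) L, HasDerivWithinAt Γ (Γ' t) (Icc 0 L) t)
    (hcont : ContinuousOn Γ' (Icc 0 L))
    (hunit : ∀ t ∈ Icc (0:ℝ) L, ‖Γ' t‖ = 1)
    (E : Set ℂ) (hEsub : E ⊆ Γ '' Icc 0 L)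
    (z : ℂ) (φ : ℝ) (D : ℝ)
    (hD : ∀ t ∈ Icc (0:ℝ) L, Γ t ∈ E →
      Metric.infDist z {p : ℂ | ∃ s : ℝ, p = Γ t + (s : ℂ) * (Complex.I * Γ' t)} ≤ D) :
    volume (⋃ t ∈ Set.Icc (0:ℝ) 1,
        (fun u : ℂ => Complex.exp ((t * φ : ℝ) * Complex.I) * (u - z) + z) '' E) ≤
      ENNReal.ofReal (|φ| * D) * μH[1] E := by
  have hD' : ∀ t ∈ Icc (0:ℝ) L, Γ t ∈ E → |⟪Γ t - z, Γ' t⟫| ≤ D := fun t ht htE =>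
    (abs_inner_le_mul_infDist_normal (Γ t) (Γ' t) z).trans
      (by rw [hunit t ht, one_mul]; exact hD t ht htE)
  refine ENNReal.le_of_forall_lt_one_le_ofReal_inv_one_sub_mul fun ε hε hε1 => ?_
  exact volume_iUnion_rotate_image_le_of_lt_one hderiv hcont hunit hEsub hD' hε hε1

/-- If `E` is a finite-`H¹`-measure subset of a `C¹` curve `Γ` (arc-length
parametrized), and the distance from `z` to the normal line of `Γ` at every point of
`E` is at most `D`, then rotating `E` continuously around `z` by total angle `φ`
sweeps out area at most `|φ| · D · H¹(E)`. -/
theorem rotation_sweep_normal_bound (L : ℝ) (Γ Γ' : ℝ → ℂ)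
    (hderiv : ∀ t ∈ Icc (0:ℝ) L, HasDerivWithinAt Γ (Γ' t) (Icc 0 L) t)
    (hcont : ContinuousOn Γ' (Icc 0 L))
    (hunit : ∀ t ∈ Icc (0:ℝ) L, ‖Γ' t‖ = 1)
    (E : Set ℂ) (hEsub : E ⊆ Γ '' Icc 0 L) (hEfin : μH[1] E ≠ ⊤)
    (z : ℂ) (φ : ℝ) (D : ℝ) (hD0 : 0 ≤ D)
    (hD : ∀ t ∈ Icc (0:ℝ) L, Γ t ∈ E →
      Metric.infDist z {p : ℂ | ∃ s : ℝ, p = Γ t + (s : ℂ) * (Complex.I * Γ' t)} ≤ D) :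
    volume (⋃ t ∈ Set.Icc (0:ℝ) 1,
        (fun u : ℂ => Complex.exp ((t * φ : ℝ) * Complex.I) * (u - z) + z) '' E) ≤
      ENNReal.ofReal (|φ| * D) * μH[1] E :=
  rotation_sweep_normal_bound_general L Γ Γ' hderiv hcont hunit E hEsub z φ D hD
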